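/- arXiv:cs/0311043 — 7 statements merged into one kernel-verified Lean document; each statement's English description precedes it below -/
import Mathlib

section
/- With mem k l ↔ l.get? k = some true, for all lists l₁ l₂ : List Bool, the following are equivalent: (i) ∀ k, mem k l₁ ↔ mem k l₂; (ii) there exists m : ℕ such that l₁ ++ List.replicate m false = l₂ or l₂ ++ List.replicate m false = l₁. -/
def mem (k : ℕ) (l : List Bool) : Prop := l[k]? = some true

namespace List

variable {α : Type*} {d : α}

theorem getD_append_replicate (l : List α) (m k : ℕ) :
    (l ++ replicate m d).getD k d = l.getD k d := by
  rcases lt_or_ge k l.length with hk | hk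
  · exact getD_append _ _ _ _ hk
  · rw [getD_append_right _ _ _ _ hk, getD_eq_default _ _ hk]
    rcases lt_or_ge (k - l.length) m with hm | hm
    · exact getD_replicate _ hm
    · exact getD_eq_default _ _ (by simpa using hm)

theorem append_replicate_eq_of_getD_eq {l₁ l₂ : List α} (hle : l₁.length ≤ l₂.length)
    (h : ∀ k, l₁.getD k d = l₂.getD k d) :
    l₁ ++ replicate (l₂.length - l₁.length) d = l₂ := by
  refine ext_getElem (by simp [hle]) fun k hk hk₂ => ?_
  rw [← getD_eq_getElem _ d hk, ← getD_eq_getElem _ d hk₂, getD_append_replicate, h]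

theorem getD_eq_getD_iff {l₁ l₂ : List α} :
    (∀ k, l₁.getD k d = l₂.getD k d) ↔
      ∃ m, l₁ ++ replicate m d = l₂ ∨ l₂ ++ replicate m d = l₁ := by
  refine ⟨fun h => ?_, ?_⟩
  · rcases le_total l₁.length l₂.length with hle | hle
    · exact ⟨_, .inl (append_replicate_eq_of_getD_eq hle h)⟩
    · exact ⟨_, .inr (append_replicate_eq_of_getD_eq hle fun k => (h k).symm)⟩
  · rintro ⟨m, rfl | rfl⟩ k <;> simp only [getD_append_replicate]

end List

theorem mem_iff_getD (k : ℕ) (l : List Bool) : mem k l ↔ l.getD k false = true := by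
  rw [mem, List.getD_eq_getElem?_getD]
  rcases l[k]? with _ | _ | _ <;> simp

theorem same_set_iff_trailing_false (l₁ l₂ : List Bool) :
    (∀ k : ℕ, mem k l₁ ↔ mem k l₂) ↔
    (∃ m : ℕ, l₁ ++ List.replicate m false = l₂ ∨ l₂ ++ List.replicate m false = l₁) := by
  simp only [mem_iff_getD, ← Bool.eq_iff_iff]
  exact List.getD_eq_getD_iff
end

section
/- Define maxP : List Bool → ℕ → Prop inductively by: maxP (true :: l) 0 if new1 l; maxP (true :: l) (n+1) if maxP l n; maxP (false :: l) (n+1) if maxP l n; where new1 l means l consists only of false entries. Then for every l : List Bool and n : ℕ, maxP l n holds iff mem n l ∧ ∀ k, mem k l → k ≤ n (where mem k l ↔ l.get? k = some true). -/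
inductive new1 : List Bool → Prop
  | nil : new1 []
  | cons (l : List Bool) : new1 l → new1 (false :: l)

inductive maxP : List Bool → ℕ → Prop
  | base (l : List Bool) : new1 l → maxP (true :: l) 0
  | succTrue (l : List Bool) (n : ℕ) : maxP l n → maxP (true :: l) (n + 1)
  | succFalse (l : List Bool) (n : ℕ) : maxP l n → maxP (false :: l) (n + 1)

/-! The clauses of `maxP` peel off the head of the list and decrease the candidate maximum,
so it suffices to check that `mem n l ∧ ∀ k, mem k l → k ≤ n` unfolds the same way along
`b :: l`: at `n = 0` it says the head is `true` and no later entry is, and at `n + 1` it is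
the same condition for the tail and `n`. -/

@[simp]
theorem not_mem_nil (k : ℕ) : ¬ mem k [] := by
  simp [mem]

@[simp]
theorem mem_cons_zero {b : Bool} {l : List Bool} : mem 0 (b :: l) ↔ b = true := by
  simp [mem]

@[simp]
theorem mem_cons_succ {k : ℕ} {b : Bool} {l : List Bool} : mem (k + 1) (b :: l) ↔ mem k l :=
  Iff.rfl

theorem forall_mem_cons_le_zero {b : Bool} {l : List Bool} :
    (∀ k, mem k (b :: l) → k ≤ 0) ↔ ∀ k, ¬ mem k l := by
  refine ⟨fun h k hk => absurd (h (k + 1) hk) (Nat.not_succ_le_zero k), fun h k hk => ?_⟩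
  cases k with
  | zero => exact le_rfl
  | succ k => exact absurd hk (h k)

theorem forall_mem_cons_le_succ {n : ℕ} {b : Bool} {l : List Bool} :
    (∀ k, mem k (b :: l) → k ≤ n + 1) ↔ ∀ k, mem k l → k ≤ n := by
  refine ⟨fun h k hk => Nat.le_of_succ_le_succ (h (k + 1) hk), fun h k hk => ?_⟩
  cases k with
  | zero => exact Nat.zero_le _
  | succ k => exact Nat.succ_le_succ (h k hk)

theorem new1_iff_forall_not_mem {l : List Bool} : new1 l ↔ ∀ k, ¬ mem k l := by
  induction l with
  | nil => simpa using new1.nil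
  | cons b l ih =>
    constructor
    · rintro ⟨⟩ (_ | k) hk
      · simp at hk
      · exact ih.mp ‹new1 l› k hk
    · intro h
      cases b with
      | false => exact new1.cons l (ih.mpr fun k => h (k + 1))
      | true => exact absurd (mem_cons_zero.mpr rfl) (h 0)

theorem not_maxP_nil (n : ℕ) : ¬ maxP [] n := nofun

theorem maxP_cons_zero_iff {b : Bool} {l : List Bool} :
    maxP (b :: l) 0 ↔ b = true ∧ new1 l := by
  constructor
  · rintro ⟨⟩
    exact ⟨rfl, ‹_›⟩
  · rintro ⟨rfl, hl⟩
    exact maxP.base l hl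

theorem maxP_cons_succ_iff {n : ℕ} {b : Bool} {l : List Bool} :
    maxP (b :: l) (n + 1) ↔ maxP l n := by
  constructor
  · rintro (_ | ⟨_, _, h⟩ | ⟨_, _, h⟩) <;> exact h
  · intro h
    cases b
    · exact maxP.succFalse l n h
    · exact maxP.succTrue l n h

theorem maxP_correct (l : List Bool) (n : ℕ) :
    maxP l n ↔ (mem n l ∧ ∀ k : ℕ, mem k l → k ≤ n) := by
  induction l generalizing n with
  | nil => simp [not_maxP_nil]
  | cons b l ih =>
    cases n with
    | zero => rw [maxP_cons_zero_iff, mem_cons_zero, forall_mem_cons_le_zero, new1_iff_forall_not_mem]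
    | succ n => rw [maxP_cons_succ_iff, ih, mem_cons_succ, forall_mem_cons_le_succ]
end

section
/- Let a state be (W, U) : Finset ℕ × Finset ℕ. Define use (W, U) (W', U') := ∃ n ∈ W, (∀ x ∈ W ∪ U, n ≤ x) ∧ W' = W.erase n ∧ U' = insert n U, and c (W, U) := (∃ n ∈ W, ∀ x ∈ W ∪ U, n ≤ x) ∧ U ≠ ∅. Then there are no states S, S' with c S' and use S S'. -/
abbrev State := Finset ℕ × Finset ℕ

def unsafe' (S : State) : Prop := ∃ n₁ ∈ S.2, ∃ n₂ ∈ S.2, n₁ ≠ n₂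

def cre (S S' : State) : Prop :=
  S'.2 = S.2 ∧ ((S.1 ∪ S.2 = ∅ ∧ S'.1 = {0}) ∨
    (S.1 ∪ S.2 ≠ ∅ ∧ ∃ m, (∀ x ∈ S.1 ∪ S.2, x ≤ m) ∧ m ∈ S.1 ∪ S.2 ∧ S'.1 = insert (m + 1) S.1))

def use (S S' : State) : Prop :=
  ∃ n ∈ S.1, (∀ x ∈ S.1 ∪ S.2, n ≤ x) ∧ S'.1 = S.1.erase n ∧ S'.2 = insert n S.2

def rel (S S' : State) : Prop :=
  S'.1 = S.1 ∧ ∃ n ∈ S.2, S'.2 = S.2.erase n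

def c (S : State) : Prop := (∃ n ∈ S.1, ∀ x ∈ S.1 ∪ S.2, n ≤ x) ∧ S.2 ≠ ∅

def step (S S' : State) : Prop := cre S S' ∨ use S S' ∨ rel S S'

def reach (S : State) : Prop := Relation.ReflTransGen step (∅, ∅) S

/-! After a use step the moved counter `n` sits in `U'` and is strictly below every counter
still in `W' = W.erase n` (the counters of `W` are distinct, so `n` is not among them);
hence no counter of `W'` can be the minimum of `W' ∪ U'`. -/

theorem use.exists_mem_snd_forall_lt_fst {S S' : State} (h : use S S') :
    ∃ n ∈ S'.2, ∀ x ∈ S'.1, n < x := by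
  obtain ⟨n, -, hmin, hW', hU'⟩ := h
  refine ⟨n, hU' ▸ Finset.mem_insert_self n S.2, fun x hx => ?_⟩
  obtain ⟨hxn, hxW⟩ := Finset.mem_erase.mp (hW' ▸ hx)
  exact (hmin x (Finset.mem_union_left _ hxW)).lt_of_ne hxn.symm

theorem not_c_of_exists_mem_snd_forall_lt_fst {S : State} (h : ∃ n ∈ S.2, ∀ x ∈ S.1, n < x) :
    ¬ c S := by
  rintro ⟨⟨m, hmW, hmin⟩, -⟩
  obtain ⟨n, hnU, hlt⟩ := h
  exact (hmin n (Finset.mem_union_right _ hnU)).not_gt (hlt m hmW)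

theorem no_c_after_use : ¬ ∃ S S1 : State, c S1 ∧ use S S1 := by
  rintro ⟨S, S1, hc, huse⟩
  exact not_c_of_exists_mem_snd_forall_lt_fst huse.exists_mem_snd_forall_lt_fst hc
end

section
/- Let a state be (W, U) : Finset ℕ × Finset ℕ. Define cre (W, U) (W', U') := U' = U ∧ ((W ∪ U = ∅ ∧ W' = {0}) ∨ (W ∪ U ≠ ∅ ∧ ∃ m, (∀ x ∈ W ∪ U, x ≤ m) ∧ m ∈ W ∪ U ∧ W' = insert (m+1) W)), and c (W, U) := (∃ n ∈ W, ∀ x ∈ W ∪ U, n ≤ x) ∧ U ≠ ∅. Then for all states S, S', if c S' and cre S S', then c S. -/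
theorem Finset.mem_and_le_of_le_insert_union {α : Type*} [Preorder α] [DecidableEq α]
    {W U : Finset α} {a n u : α} (hu : u ∈ U) (hua : u < a) (hn : n ∈ insert a W)
    (hmin : ∀ x ∈ insert a W ∪ U, n ≤ x) : n ∈ W ∧ ∀ x ∈ W ∪ U, n ≤ x := by
  have hna : n ≠ a := (lt_of_le_of_lt (hmin u (mem_union_right _ hu)) hua).ne
  refine ⟨(mem_insert.mp hn).resolve_left hna, fun x hx => hmin x ?_⟩
  rw [insert_union]
  exact mem_insert_of_mem hx

theorem cre.exists_fst_eq_insert {S S' : State} (h : cre S S') (hU : S.2.Nonempty) :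
    ∃ m, (∀ x ∈ S.1 ∪ S.2, x ≤ m) ∧ S'.1 = insert (m + 1) S.1 := by
  rcases h.2 with ⟨hempty, -⟩ | ⟨-, m, hmax, -, hW⟩
  · exact absurd (Finset.union_eq_empty.mp hempty).2 hU.ne_empty
  · exact ⟨m, hmax, hW⟩

theorem cre_c_back (S S1 : State) (h1 : c S1) (h2 : cre S S1) : c S := by
  obtain ⟨⟨n, hn, hmin⟩, hU1⟩ := h1
  rw [h2.1] at hmin hU1
  obtain ⟨u, hu⟩ := Finset.nonempty_iff_ne_empty.mpr hU1
  obtain ⟨m, hmax, hW⟩ := h2.exists_fst_eq_insert ⟨u, hu⟩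
  rw [hW] at hn hmin
  have hum : u < m + 1 := Nat.lt_succ_of_le (hmax u (Finset.mem_union_right _ hu))
  exact ⟨⟨n, Finset.mem_and_le_of_le_insert_union hu hum hn hmin⟩, hU1⟩
end

section
/- Let a state be (W, U) : Finset ℕ × Finset ℕ, with transitions cre, use, rel as follows: cre (W,U) (W',U') := U' = U ∧ ((W ∪ U = ∅ ∧ W' = {0}) ∨ (W ∪ U ≠ ∅ ∧ ∃ m, (∀ x ∈ W ∪ U, x ≤ m) ∧ m ∈ W ∪ U ∧ W' = insert (m+1) W)); use (W,U) (W',U') := ∃ n ∈ W, (∀ x ∈ W ∪ U, n ≤ x) ∧ W' = W.erase n ∧ U' = insert n U; rel (W,U) (W',U') := W' = W ∧ ∃ n ∈ U, U' = U.erase n. Let step S S' := cre S S' ∨ use S S' ∨ rel S S'. Define unsafe (W,U) := ∃ n₁ ∈ U, ∃ n₂ ∈ U, n₁ ≠ n₂ and c (W,U) := (∃ n ∈ W, ∀ x ∈ W ∪ U, n ≤ x) ∧ U ≠ ∅. Then for all states S, S', if ¬unsafe S ∧ ¬c S and step S S', then ¬unsafe S' ∧ ¬c S'. -/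
theorem not_unsafe'_iff_card_le_one {S : State} : ¬ unsafe' S ↔ S.2.card ≤ 1 := by
  rw [unsafe', ← Finset.one_lt_card, not_lt]

theorem not_c_of_snd_eq_empty {S : State} (h : S.2 = ∅) : ¬ c S :=
  fun hc => hc.2 h

section Transitions

variable {S S1 : State}

namespace cre

theorem unsafe'_iff (hs : cre S S1) : unsafe' S1 ↔ unsafe' S := by
  rw [unsafe', unsafe', hs.1]

/-- The fresh ticket `m + 1` exceeds an existing one, so it is never the minimum. -/
theorem c_of_c (hs : cre S S1) (hc : c S1) : c S := by
  obtain ⟨hU, ⟨hempty, -⟩ | ⟨-, m, -, hm, hW⟩⟩ := hs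
  · exact absurd (hU.trans (Finset.union_eq_empty.mp hempty).2) hc.2
  obtain ⟨⟨n, hn, hmin⟩, hne⟩ := hc
  have hsub : S.1 ∪ S.2 ⊆ S1.1 ∪ S1.2 := by
    rw [hW, hU]
    exact Finset.union_subset_union (Finset.subset_insert _ _) subset_rfl
  have hnm : n ≤ m := hmin m (hsub hm)
  rw [hW, Finset.mem_insert] at hn
  rcases hn with rfl | hn
  · omega
  · exact ⟨⟨n, hn, fun x hx => hmin x (hsub hx)⟩, hU ▸ hne⟩

end cre

namespace use

/-- The minimum of `S.1 ∪ S.2` moves from the waiting set to the used set. -/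
theorem not_c_right (hs : use S S1) : ¬ c S1 := by
  obtain ⟨n, -, hmin, hW, hU⟩ := hs
  rintro ⟨⟨n', hn', hmin'⟩, -⟩
  rw [hW, Finset.mem_erase] at hn'
  have h₁ : n' ≤ n :=
    hmin' n (by rw [hU]; exact Finset.mem_union_right _ (Finset.mem_insert_self _ _))
  have h₂ : n ≤ n' := hmin n' (Finset.mem_union_left _ hn'.2)
  exact hn'.1 (le_antisymm h₁ h₂)

theorem not_unsafe'_right (hs : use S S1) (hc : ¬ c S) : ¬ unsafe' S1 := by
  obtain ⟨n, hn, hmin, -, hU⟩ := hs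
  have hempty : S.2 = ∅ := by
    by_contra hne
    exact hc ⟨⟨n, hn, hmin⟩, hne⟩
  rw [not_unsafe'_iff_card_le_one, hU, hempty]
  simp

end use

theorem rel.snd_right_eq_empty (hs : rel S S1) (hu : ¬ unsafe' S) : S1.2 = ∅ := by
  obtain ⟨-, n, hn, hU⟩ := hs
  rw [not_unsafe'_iff_card_le_one] at hu
  rw [← Finset.card_eq_zero, hU, Finset.card_erase_of_mem hn]
  omega

end Transitions

theorem invariant_step (S S1 : State) (h : ¬ unsafe' S ∧ ¬ c S) (hs : step S S1) :
    ¬ unsafe' S1 ∧ ¬ c S1 := by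
  obtain ⟨hu, hc⟩ := h
  rcases hs with hs | hs | hs
  · exact ⟨hs.unsafe'_iff.not.mpr hu, mt hs.c_of_c hc⟩
  · exact ⟨hs.not_unsafe'_right hc, hs.not_c_right⟩
  · have hempty := hs.snd_right_eq_empty hu
    exact ⟨not_unsafe'_iff_card_le_one.mpr (by simp [hempty]), not_c_of_snd_eq_empty hempty⟩
end

section
/- Let states, transitions cre, use, rel, and step be as in the DBakery protocol (step S S' := cre S S' ∨ use S S' ∨ rel S S'), and let reach be the reflexive-transitive closure of step starting from the initial state (∅, ∅). Then for every state (W, U) with reach (W, U), U contains at most one element (i.e., ¬∃ n₁ ∈ U, ∃ n₂ ∈ U, n₁ ≠ n₂; equivalently U.card ≤ 1). -/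
/-!
Inductive invariant: at most one counter is in use, and it is smaller than every waiting counter.
`cre` adds a counter above all existing ones and `rel` only shrinks `U`, so both preserve it.
`use` admits `n ∈ W` only if `n` is the minimum of `W ∪ U`; as every counter in `U` lies below
`n`, this forces `U = ∅`, and afterwards `U = {n}` with `n` below the remaining waiting counters.
-/

def BakeryInv (S : State) : Prop := S.2.card ≤ 1 ∧ ∀ u ∈ S.2, ∀ w ∈ S.1, u < w

namespace BakeryInv

variable {S S' : State}

lemma cre (hS : BakeryInv S) (h : _root_.cre S S') : BakeryInv S' := by
  obtain ⟨hcard, hlt⟩ := hS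
  obtain ⟨hU, ⟨hempty, -⟩ | ⟨-, m, hm, -, hW⟩⟩ := h
  · refine ⟨hU ▸ hcard, fun u hu => ?_⟩
    rw [hU] at hu
    simp [Finset.union_eq_empty.mp hempty |>.2] at hu
  · refine ⟨hU ▸ hcard, fun u hu w hw => ?_⟩
    rw [hU] at hu
    rw [hW, Finset.mem_insert] at hw
    rcases hw with rfl | hw
    · exact Nat.lt_succ_of_le (hm u (Finset.mem_union_right _ hu))
    · exact hlt u hu w hw

lemma use (hS : BakeryInv S) (h : _root_.use S S') : BakeryInv S' := by
  obtain ⟨-, hlt⟩ := hS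
  obtain ⟨n, hn, hmin, hW, hU⟩ := h
  have hU_empty : S.2 = ∅ := Finset.eq_empty_of_forall_notMem fun u hu =>
    (hmin u (Finset.mem_union_right _ hu)).not_gt (hlt u hu n hn)
  rw [hU_empty, insert_empty_eq] at hU
  refine ⟨by simp [hU], fun u hu w hw => ?_⟩
  rw [hU, Finset.mem_singleton] at hu
  obtain ⟨hwn, hw⟩ := Finset.mem_erase.mp (hW ▸ hw)
  exact hu ▸ (hmin w (Finset.mem_union_left _ hw)).lt_of_ne hwn.symm

lemma rel (hS : BakeryInv S) (h : _root_.rel S S') : BakeryInv S' := by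
  obtain ⟨hcard, hlt⟩ := hS
  obtain ⟨hW, n, -, hU⟩ := h
  refine ⟨hU ▸ Finset.card_erase_le.trans hcard, fun u hu w hw => ?_⟩
  rw [hU] at hu
  exact hlt u (Finset.mem_of_mem_erase hu) w (hW ▸ hw)

lemma step (hS : BakeryInv S) : _root_.step S S' → BakeryInv S'
  | .inl h => hS.cre h
  | .inr (.inl h) => hS.use h
  | .inr (.inr h) => hS.rel h

lemma of_reach (h : reach S) : BakeryInv S := by
  induction h with
  | refl => simp [BakeryInv]
  | tail _ hstep ih => exact ih.step hstep

end BakeryInv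

theorem mutual_exclusion (W U : Finset ℕ) (h : reach (W, U)) :
    (¬ ∃ n₁ ∈ U, ∃ n₂ ∈ U, n₁ ≠ n₂) ∧ U.card ≤ 1 := by
  have hcard : U.card ≤ 1 := (BakeryInv.of_reach h).1
  refine ⟨?_, hcard⟩
  rintro ⟨n₁, h₁, n₂, h₂, hne⟩
  exact hne (Finset.card_le_one.mp hcard n₁ h₁ n₂ h₂)
end

section
/- Let states, transitions, step, and reach be as in the DBakery protocol with initial state (∅, ∅), and define c (W, U) := (∃ n ∈ W, ∀ x ∈ W ∪ U, n ≤ x) ∧ U ≠ ∅. Then for every reachable state S, ¬ c S: in no reachable state does a waiting process hold the globally minimal counter while the resource is in use. -/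
/-!
Every counter in use is strictly smaller than every waiting counter: `cre` adds a new maximum
to `W`, `use` moves the minimum of `W ∪ U` into `U`, and `rel` only shrinks `U`. Hence, as soon
as `U` is nonempty, no waiting counter can be minimal in `W ∪ U`.
-/

def InUseLtWaiting (S : State) : Prop := ∀ u ∈ S.2, ∀ w ∈ S.1, u < w

namespace InUseLtWaiting

variable {S S' : State}

lemma of_cre (hi : InUseLtWaiting S) (hs : cre S S') : InUseLtWaiting S' := by
  obtain ⟨hU, ⟨hempty, -⟩ | ⟨-, m, hmax, -, hW⟩⟩ := hs
  · intro u hu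
    simp [hU, (Finset.union_eq_empty.mp hempty).2] at hu
  · intro u hu w hw
    rw [hU] at hu
    rw [hW, Finset.mem_insert] at hw
    rcases hw with rfl | hw
    · exact Nat.lt_succ_of_le (hmax u (Finset.mem_union_right _ hu))
    · exact hi u hu w hw

lemma of_use (hi : InUseLtWaiting S) (hs : use S S') : InUseLtWaiting S' := by
  obtain ⟨n, -, hmin, hW, hU⟩ := hs
  intro u hu w hw
  rw [hU, Finset.mem_insert] at hu
  rw [hW, Finset.mem_erase] at hw
  rcases hu with rfl | hu
  · exact (hmin w (Finset.mem_union_left _ hw.2)).lt_of_ne hw.1.symm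
  · exact hi u hu w hw.2

lemma of_rel (hi : InUseLtWaiting S) (hs : rel S S') : InUseLtWaiting S' := by
  obtain ⟨hW, n, -, hU⟩ := hs
  intro u hu w hw
  rw [hU] at hu
  rw [hW] at hw
  exact hi u (Finset.mem_of_mem_erase hu) w hw

lemma of_step (hi : InUseLtWaiting S) : step S S' → InUseLtWaiting S'
  | .inl hs => hi.of_cre hs
  | .inr (.inl hs) => hi.of_use hs
  | .inr (.inr hs) => hi.of_rel hs

lemma of_reach (h : reach S) : InUseLtWaiting S := by
  induction h with
  | refl => simp [InUseLtWaiting]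
  | tail _ hs ih => exact ih.of_step hs

lemma not_c (hi : InUseLtWaiting S) : ¬ c S := by
  rintro ⟨⟨n, hn, hmin⟩, hU⟩
  obtain ⟨u, hu⟩ := Finset.nonempty_iff_ne_empty.2 hU
  exact (hi u hu n hn).not_ge (hmin u (Finset.mem_union_right _ hu))

end InUseLtWaiting

theorem not_c_reachable (S : State) (h : reach S) : ¬ c S :=
  (InUseLtWaiting.of_reach h).not_c
end
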